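/- Let β, ρ, β̂, ρ̂, r_ρ, r_β, ρ̲ be reals with ρ ≥ ρ̂ - r_ρ ≥ ρ̲ > 0, β ≤ β̂ + r_β, and 0 ≤ r_ρ ≤ r_β, and suppose β̂ - r_β ≥ 0, ρ̂ ≤ ρ̄, r_ρ ≤ ρ̄, β̂ ≤ β̄, r_β ≤ β̄. Then β/ρ - (β̂ - r_β)/(ρ̂ + r_ρ) ≤ r_β · (2ρ̄ + 2β̄)/ρ̲². -/
import Mathlib


theorem true_vs_pessimistic_gap (β ρ βhat ρhat rρ rβ ρlow ρbar βbar : ℝ)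
    (h1 : ρhat - rρ ≤ ρ) (h2 : ρlow ≤ ρhat - rρ) (h3 : 0 < ρlow)
    (h4 : β ≤ βhat + rβ) (h5 : 0 ≤ rρ) (h6 : rρ ≤ rβ)
    (h7 : 0 ≤ βhat - rβ)
    (h8 : ρhat ≤ ρbar) (h9 : rρ ≤ ρbar) (h10 : βhat ≤ βbar) (h11 : rβ ≤ βbar) :
    β / ρ - (βhat - rβ) / (ρhat + rρ) ≤ rβ * (2 * ρbar + 2 * βbar) / ρlow ^ 2 := by
  have ha : (0:ℝ) < ρhat - rρ := lt_of_lt_of_le h3 h2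
  have hρ : (0:ℝ) < ρ := lt_of_lt_of_le ha h1
  have hrβ : 0 ≤ rβ := h5.trans h6
  have hb : (0:ℝ) < ρhat + rρ := by linarith
  have hnum : 0 ≤ βhat + rβ := by linarith
  have step1 : β / ρ ≤ (βhat + rβ) / (ρhat - rρ) :=
    div_le_div₀ hnum h4 ha h1
  have step2 : (βhat + rβ) / (ρhat - rρ) - (βhat - rβ) / (ρhat + rρ)
      ≤ rβ * (2 * ρbar + 2 * βbar) / ρlow ^ 2 := by
    rw [div_sub_div _ _ (ne_of_gt ha) (ne_of_gt hb), div_le_div_iff₀ (by positivity) (by positivity)]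
    have hN : (0:ℝ) ≤ 2 * βhat * rρ + 2 * rβ * ρhat := by
      have : (0:ℝ) ≤ βhat := by linarith
      have : (0:ℝ) ≤ ρhat := by linarith
      positivity
    have hD : ρlow ^ 2 ≤ (ρhat - rρ) * (ρhat + rρ) := by
      have := mul_le_mul h2 (by linarith : ρlow ≤ ρhat + rρ) h3.le ha.le
      nlinarith
    have hNle : 2 * βhat * rρ + 2 * rβ * ρhat ≤ rβ * (2 * ρbar + 2 * βbar) := by
      nlinarith [mul_le_mul h10 h6 h5 (by linarith : (0:ℝ) ≤ βbar),
        mul_le_mul_of_nonneg_left h8 hrβ]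
    nlinarith [mul_le_mul_of_nonneg_left hD hN,
      mul_nonneg (sub_nonneg.2 hNle) (mul_pos ha hb).le]
  linarith
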